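/- arXiv:math/0511455 — 3 statements merged into one kernel-verified Lean document; each statement's English description precedes it below -/
import Mathlib

section
/- For every prime q ≥ 3, every integer n ≥ 3, every admissible subset F ⊆ G = (ℤ/qℤ)ⁿ and every coefficient system m for F, the ratio K²(p)/χ(p) tends to 12 as the positive integer p tends to infinity (limit taken in ℝ). In particular the limit is independent of the choices of F and m. -/
open Finset

/-- The `i`-th standard basis vector of `G = (ℤ/qℤ)ⁿ`. -/
def stdVec (q n : ℕ) (i : Fin n) : Fin n → ZMod q := Pi.single i 1

/-- The set `{0, e₁+e₂, e₁, e₂, …, eₙ}` of required elements of an admissible set. -/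
def reqSet (q n : ℕ) (hn : 3 ≤ n) : Finset (Fin n → ZMod q) :=
  insert 0 (insert (stdVec q n ⟨0, by omega⟩ + stdVec q n ⟨1, by omega⟩)
    (Finset.image (stdVec q n) Finset.univ))

/-- `F ⊆ G = (ℤ/qℤ)ⁿ` is admissible if it contains `{0, e₁+e₂, e₁, …, eₙ}`,
`F ∩ kF = {0}` for `k = 2, …, q-1`, and `G = ⋃_{k=1}^{q-1} kF`. -/
def Admissible (q n : ℕ) [NeZero q] (hn : 3 ≤ n) (F : Finset (Fin n → ZMod q)) : Prop :=
  reqSet q n hn ⊆ F ∧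
  (∀ k : ℕ, 2 ≤ k → k ≤ q - 1 → F ∩ F.image (fun σ => k • σ) = {0}) ∧
  (Finset.Icc 1 (q - 1)).biUnion (fun k => F.image (fun σ => k • σ)) = Finset.univ

/-- `m : G → {0, …, q-1}` is a coefficient system for `F` if `m_{e₁} = 1`,
`m_σ = 0` off `F`, and `∑_{σ ∈ G} m_σ • σ = 0` in `G`. -/
def CoeffSystem (q n : ℕ) [NeZero q] (hn : 3 ≤ n) (F : Finset (Fin n → ZMod q))
    (m : (Fin n → ZMod q) → ℕ) : Prop :=
  (∀ σ, m σ ≤ q - 1) ∧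
  m (stdVec q n ⟨0, by omega⟩) = 1 ∧
  (∀ σ ∉ F, m σ = 0) ∧
  ∑ σ : Fin n → ZMod q, m σ • σ = 0

/-- `T = ∑_{σ ∈ F ∖ {0,e₁}} (q + m_σ)`. -/
def Tsum (q n : ℕ) (hn : 3 ≤ n) (F : Finset (Fin n → ZMod q))
    (m : (Fin n → ZMod q) → ℕ) : ℕ :=
  ∑ σ ∈ F \ {0, stdVec q n ⟨0, by omega⟩}, (q + m σ)

/-- `f(γ) = ∑_{σ ∈ F ∖ {0,e₁}} ((γ·σ)‾)·(q + m_σ)`, where `(γ·σ)‾ ∈ {0,…,q-1}`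
is the canonical representative of `∑ᵢ γᵢσᵢ ∈ ℤ/qℤ`. -/
def fVal (q n : ℕ) (hn : 3 ≤ n) (F : Finset (Fin n → ZMod q))
    (m : (Fin n → ZMod q) → ℕ) (γ : Fin n → ZMod q) : ℕ :=
  ∑ σ ∈ F \ {0, stdVec q n ⟨0, by omega⟩}, (∑ i, γ i * σ i).val * (q + m σ)

/-- `K²(p) = qⁿ·[(−3 + ((q−1)/q)(p²+p+1+T))² − (p²+p+1)·(1 − ((q−1)/q)(p+1))²]`. -/
def Ksq (q n : ℕ) (hn : 3 ≤ n) (F : Finset (Fin n → ZMod q))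
    (m : (Fin n → ZMod q) → ℕ) (p : ℕ) : ℚ :=
  (q : ℚ) ^ n *
    ((-3 + (((q : ℚ) - 1) / (q : ℚ)) *
        ((p : ℚ) ^ 2 + (p : ℚ) + 1 + (Tsum q n hn F m : ℚ))) ^ 2
      - ((p : ℚ) ^ 2 + (p : ℚ) + 1) *
        (1 - (((q : ℚ) - 1) / (q : ℚ)) * ((p : ℚ) + 1)) ^ 2)

/-- `S(p) = (1/q²)·∑_{γ∈G} [(γ̄₁(p²+p+1)+f(γ))·(−3q+γ̄₁(p²+p+1)+f(γ))
  + γ̄₁(p+1)(q−γ̄₁(p+1))(p²+p+1)]`. -/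
def Sval (q n : ℕ) [NeZero q] (hn : 3 ≤ n) (F : Finset (Fin n → ZMod q))
    (m : (Fin n → ZMod q) → ℕ) (p : ℕ) : ℚ :=
  (1 / (q : ℚ) ^ 2) *
    ∑ γ : Fin n → ZMod q,
      ((((γ ⟨0, by omega⟩).val : ℚ) * ((p : ℚ) ^ 2 + (p : ℚ) + 1) + (fVal q n hn F m γ : ℚ)) *
          (-3 * (q : ℚ) + ((γ ⟨0, by omega⟩).val : ℚ) * ((p : ℚ) ^ 2 + (p : ℚ) + 1)
            + (fVal q n hn F m γ : ℚ))
        + ((γ ⟨0, by omega⟩).val : ℚ) * ((p : ℚ) + 1)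
            * ((q : ℚ) - ((γ ⟨0, by omega⟩).val : ℚ) * ((p : ℚ) + 1))
            * ((p : ℚ) ^ 2 + (p : ℚ) + 1))

/-- `χ(p) = qⁿ + (1/2)·S(p)`. -/
def chiVal (q n : ℕ) [NeZero q] (hn : 3 ≤ n) (F : Finset (Fin n → ZMod q))
    (m : (Fin n → ZMod q) → ℕ) (p : ℕ) : ℚ :=
  (q : ℚ) ^ n + (1 / 2) * Sval q n hn F m p


open Filter in
lemma sum_range_cast' (N : ℕ) : ∑ i ∈ Finset.range N, (i:ℚ) = N*(N-1)/2 := by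
  induction N with
  | zero => simp
  | succ k ih => rw [Finset.sum_range_succ, ih]; push_cast; ring

lemma sum_range_sq_cast' (N : ℕ) : ∑ i ∈ Finset.range N, (i:ℚ)^2 = N*(N-1)*(2*N-1)/6 := by
  induction N with
  | zero => simp
  | succ k ih => rw [Finset.sum_range_succ, ih]; push_cast; ring

lemma sum_zmod_val' (k : ℕ) (g : ℕ → ℚ) :
    ∑ a : ZMod (k+1), g a.val = ∑ i ∈ Finset.range (k+1), g i :=
  Fin.sum_univ_eq_sum_range _ _

lemma sum_pi_eval' (q k : ℕ) [NeZero q] (g : ZMod q → ℚ) :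
    ∑ γ : Fin (k+1) → ZMod q, g (γ 0) = (q:ℚ)^k * ∑ a : ZMod q, g a := by
  rw [← Equiv.sum_comp (Fin.consEquiv (fun _ : Fin (k+1) => ZMod q)) (fun γ => g (γ 0)),
    Fintype.sum_prod_type]
  simp [Fin.consEquiv, Fin.cons_zero, Finset.sum_const, Finset.mul_sum, ZMod.card,
    mul_comm, ← Finset.sum_mul]

open Filter in
lemma ratio_tendsto' (A B C B' C' : ℝ) (hA : A ≠ 0) :
    Filter.Tendsto (fun p : ℕ =>
      (A*(p:ℝ)^3 + B*((p:ℝ)^2+(p:ℝ)) + C) / ((A/12)*(p:ℝ)^3 + B'*((p:ℝ)^2+(p:ℝ)) + C'))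
      Filter.atTop (nhds 12) := by
  have h0 : Tendsto (fun p : ℕ => ((p:ℝ))⁻¹) atTop (nhds 0) :=
    tendsto_inv_atTop_zero.comp tendsto_natCast_atTop_atTop
  have hnum : Tendsto (fun p : ℕ => A + B*(((p:ℝ))⁻¹ + ((p:ℝ))⁻¹^2) + C*((p:ℝ))⁻¹^3)
      atTop (nhds A) := by
    have : Tendsto (fun p : ℕ => A + B*(((p:ℝ))⁻¹ + ((p:ℝ))⁻¹^2) + C*((p:ℝ))⁻¹^3)
        atTop (nhds (A + B*(0+0^2) + C*0^3)) :=
      (tendsto_const_nhds.add (tendsto_const_nhds.mul (h0.add (h0.pow 2)))).add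
        (tendsto_const_nhds.mul (h0.pow 3))
    simpa using this
  have hden : Tendsto (fun p : ℕ => A/12 + B'*(((p:ℝ))⁻¹ + ((p:ℝ))⁻¹^2) + C'*((p:ℝ))⁻¹^3)
      atTop (nhds (A/12)) := by
    have : Tendsto (fun p : ℕ => A/12 + B'*(((p:ℝ))⁻¹ + ((p:ℝ))⁻¹^2) + C'*((p:ℝ))⁻¹^3)
        atTop (nhds (A/12 + B'*(0+0^2) + C'*0^3)) :=
      (tendsto_const_nhds.add (tendsto_const_nhds.mul (h0.add (h0.pow 2)))).add
        (tendsto_const_nhds.mul (h0.pow 3))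
    simpa using this
  have hA12 : A/12 ≠ 0 := div_ne_zero hA (by norm_num)
  have key := hnum.div hden hA12
  have h12 : A / (A/12) = 12 := by field_simp
  rw [h12] at key
  refine key.congr' ?_
  filter_upwards [Filter.eventually_ge_atTop 1] with p hp
  have hp0 : ((p:ℝ)) ≠ 0 := by
    have : (0:ℝ) < p := by exact_mod_cast hp
    linarith
  have h3 : ((p:ℝ))^3 ≠ 0 := pow_ne_zero _ hp0
  simp only [Pi.div_apply]
  rw [← div_div_div_cancel_right₀ h3 (A*(p:ℝ)^3 + B*((p:ℝ)^2+(p:ℝ)) + C)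
    ((A/12)*(p:ℝ)^3 + B'*((p:ℝ)^2+(p:ℝ)) + C')]
  congr 1 <;> rw [eq_div_iff h3] <;> field_simp [hp0] <;> ring

/-- As the positive integer `p` tends to infinity, the ratio `K²(p)/χ(p)` tends to `12`
(in `ℝ`), independently of the choice of admissible set `F` and coefficient system `m`. -/
theorem stmt0 (q n : ℕ) [NeZero q] (hq : q.Prime) (hq3 : 3 ≤ q) (hn : 3 ≤ n)
    (F : Finset (Fin n → ZMod q)) (hF : Admissible q n hn F)
    (m : (Fin n → ZMod q) → ℕ) (hm : CoeffSystem q n hn F m) :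
    Filter.Tendsto
      (fun p : ℕ => ((Ksq q n hn F m p / chiVal q n hn F m p : ℚ) : ℝ))
      Filter.atTop (nhds 12) := by
  obtain ⟨k, rfl⟩ : ∃ k, n = k + 1 := ⟨n - 1, by omega⟩
  have hq0 : (q:ℚ) ≠ 0 := by
    have : 0 < q := by omega
    exact_mod_cast this.ne'
  have hq3' : (3:ℚ) ≤ (q:ℚ) := by exact_mod_cast hq3
  obtain ⟨A, B, C, B', C', hA, hKeq, hchieq⟩ :
      ∃ A B C B' C' : ℚ, 0 < A ∧
        (∀ p : ℕ, Ksq q (k+1) hn F m p = A*(p:ℚ)^3 + B*((p:ℚ)^2+(p:ℚ)) + C) ∧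
        (∀ p : ℕ, chiVal q (k+1) hn F m p = (A/12)*(p:ℚ)^3 + B'*((p:ℚ)^2+(p:ℚ)) + C') := by
    refine ⟨(q:ℚ)^(k+1) * ((q:ℚ)^2-1) / (q:ℚ)^2,
      (q:ℚ)^(k+1) * ((((q:ℚ)-1)/(q:ℚ))^2*(2*((Tsum q (k+1) hn F m : ℕ):ℚ)-1)
        - 2*(((q:ℚ)-1)/(q:ℚ)) - 1),
      (q:ℚ)^(k+1) * ((((q:ℚ)-1)/(q:ℚ))^2*(2*((Tsum q (k+1) hn F m : ℕ):ℚ)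
          + ((Tsum q (k+1) hn F m : ℕ):ℚ)^2)
        - 4*(((q:ℚ)-1)/(q:ℚ)) - 6*(((q:ℚ)-1)/(q:ℚ))*((Tsum q (k+1) hn F m : ℕ):ℚ) + 8),
      (1/(2*(q:ℚ)^2)) * ∑ γ : Fin (k+1) → ZMod q,
        (-(((γ 0).val:ℚ))^2 + 2*((γ 0).val:ℚ)*((fVal q (k+1) hn F m γ:ℕ):ℚ)
          - ((γ 0).val:ℚ)*(q:ℚ)),
      (q:ℚ)^(k+1) + (1/(2*(q:ℚ)^2)) * ∑ γ : Fin (k+1) → ZMod q,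
        (2*((γ 0).val:ℚ)*((fVal q (k+1) hn F m γ:ℕ):ℚ) - 2*((γ 0).val:ℚ)*(q:ℚ)
          + ((fVal q (k+1) hn F m γ:ℕ):ℚ)^2 - 3*(q:ℚ)*((fVal q (k+1) hn F m γ:ℕ):ℚ)),
      ?_, ?_, ?_⟩
    · apply div_pos
      · apply mul_pos (pow_pos (by linarith) _)
        nlinarith
      · exact pow_pos (by linarith) _
    · intro p
      unfold Ksq
      field_simp
      ring
    · intro p
      have hS3 : ∑ γ : Fin (k+1) → ZMod q,
          ((q:ℚ) * ((γ 0).val:ℚ) - ((γ 0).val:ℚ)^2) = (q:ℚ)^(k+1)*((q:ℚ)^2-1)/6 := by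
        rw [sum_pi_eval' q k (fun a => (q:ℚ)*((a.val:ℕ):ℚ) - ((a.val:ℕ):ℚ)^2)]
        obtain ⟨j, hj⟩ : ∃ j, q = j + 1 := ⟨q - 1, by omega⟩
        subst hj
        rw [sum_zmod_val' j (fun i => (((j+1:ℕ)):ℚ)*(i:ℚ) - (i:ℚ)^2)]
        rw [Finset.sum_sub_distrib, ← Finset.mul_sum, sum_range_cast', sum_range_sq_cast']
        push_cast
        ring
      unfold chiVal Sval
      simp only [Fin.mk_zero]
      have hterm : ∀ γ : Fin (k+1) → ZMod q,
          ((((γ 0).val:ℚ) * ((p:ℚ)^2 + (p:ℚ) + 1) + ((fVal q (k+1) hn F m γ:ℕ):ℚ)) *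
            (-3*(q:ℚ) + ((γ 0).val:ℚ) * ((p:ℚ)^2 + (p:ℚ) + 1) + ((fVal q (k+1) hn F m γ:ℕ):ℚ))
          + ((γ 0).val:ℚ) * ((p:ℚ)+1) * ((q:ℚ) - ((γ 0).val:ℚ) * ((p:ℚ)+1)) *
            ((p:ℚ)^2 + (p:ℚ) + 1))
          = ((q:ℚ) * ((γ 0).val:ℚ) - ((γ 0).val:ℚ)^2) * (p:ℚ)^3
            + (-(((γ 0).val:ℚ))^2 + 2*((γ 0).val:ℚ)*((fVal q (k+1) hn F m γ:ℕ):ℚ)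
                - ((γ 0).val:ℚ)*(q:ℚ)) * ((p:ℚ)^2+(p:ℚ))
            + (2*((γ 0).val:ℚ)*((fVal q (k+1) hn F m γ:ℕ):ℚ) - 2*((γ 0).val:ℚ)*(q:ℚ)
                + ((fVal q (k+1) hn F m γ:ℕ):ℚ)^2 - 3*(q:ℚ)*((fVal q (k+1) hn F m γ:ℕ):ℚ)) :=
        fun γ => by ring
      rw [Finset.sum_congr rfl (fun γ _ => hterm γ), Finset.sum_add_distrib,
        Finset.sum_add_distrib, ← Finset.sum_mul, ← Finset.sum_mul, hS3]
      field_simp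
      ring
  have hA' : ((A:ℚ):ℝ) ≠ 0 := by
    have : (0:ℝ) < (A:ℝ) := by exact_mod_cast hA
    linarith
  refine (ratio_tendsto' (A:ℝ) (B:ℝ) (C:ℝ) (B':ℝ) (C':ℝ) hA').congr fun p => ?_
  rw [hKeq p, hchieq p]
  push_cast
  ring
end

section
/- For every prime q ≥ 3, every integer n ≥ 3, and every admissible subset F ⊆ G = (ℤ/qℤ)ⁿ, there exists a collection of integers m_σ ∈ {0,…,q−1} indexed by σ ∈ G such that m_{e₁} = 1, m_σ = 0 for all σ ∉ F, Σ_{σ∈G} m_σ·σ = 0 in G, and additionally m_σ = 1 for every σ ∈ F ∖ {0, e₁+e₂, e₁, e₂, …, eₙ}. -/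
open Finset

/-- Strengthening of Lemma 1: a coefficient system can moreover be chosen with
`m_σ = 1` for every `σ ∈ F ∖ {0, e₁+e₂, e₁, e₂, …, eₙ}`. -/
theorem stmt3 (q n : ℕ) [NeZero q] (hq : q.Prime) (hq3 : 3 ≤ q) (hn : 3 ≤ n)
    (F : Finset (Fin n → ZMod q)) (hF : Admissible q n hn F) :
    ∃ m : (Fin n → ZMod q) → ℕ,
      (∀ σ, m σ ≤ q - 1) ∧
      m (stdVec q n ⟨0, by omega⟩) = 1 ∧
      (∀ σ ∉ F, m σ = 0) ∧
      (∑ σ : Fin n → ZMod q, m σ • σ = 0) ∧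
      (∀ σ ∈ F \ reqSet q n hn, m σ = 1) := by
  haveI : Fact (1 < q) := ⟨by omega⟩
  set i0 : Fin n := ⟨0, by omega⟩ with hi0
  set i1 : Fin n := ⟨1, by omega⟩ with hi1
  have hone : (1 : ZMod q) ≠ 0 := one_ne_zero
  have hinj : Function.Injective (stdVec q n) := by
    intro i j h
    by_contra hij
    exact absurd (congrFun h i) (by simp [stdVec, Pi.single_apply, hij])
  have hi01 : i0 ≠ i1 := by
    intro h
    have := congrArg Fin.val h
    simp [hi0, hi1] at this
  have hi10 : i1 ≠ i0 := Ne.symm hi01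
  set e01 : Fin n → ZMod q := stdVec q n i0 + stdVec q n i1 with he01
  have h01std : ∀ i : Fin n, e01 ≠ stdVec q n i := by
    intro i h
    rcases eq_or_ne i i0 with rfl | hii
    · have h1 := congrFun h i1
      simp [he01, stdVec, Pi.single_apply, hi01, hi10] at h1
    · have h0 := congrFun h i0
      simp [he01, stdVec, Pi.single_apply, hi01, hi10, hii, Ne.symm hii] at h0
  -- membership facts for reqSet
  have hreq01 : e01 ∈ reqSet q n hn := by
    unfold reqSet
    exact Finset.mem_insert_of_mem (Finset.mem_insert_self _ _)
  have hreqstd : ∀ i : Fin n, stdVec q n i ∈ reqSet q n hn := by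
    intro i
    unfold reqSet
    exact Finset.mem_insert_of_mem (Finset.mem_insert_of_mem
      (Finset.mem_image_of_mem _ (Finset.mem_univ i)))
  set τ : Fin n → ZMod q := ∑ σ ∈ F \ reqSet q n hn, σ with hτ
  set a : ZMod q := -τ i0 - 1 with ha
  set b : Fin n → ZMod q :=
    fun i => if i = i0 then 1 else if i = i1 then -τ i1 - a else -τ i with hb
  have hb0 : b i0 = 1 := by simp [hb]
  have hb1 : b i1 = -τ i1 - a := by simp [hb, hi10]
  have hbc : ∀ c : Fin n, c ≠ i0 → c ≠ i1 → b c = -τ c := by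
    intro c h0 h1; simp [hb, h0, h1]
  set m : (Fin n → ZMod q) → ℕ := fun σ =>
    if σ ∈ F \ reqSet q n hn then 1
    else if σ = e01 then a.val
    else if h : ∃ i, σ = stdVec q n i then (b h.choose).val
    else 0 with hm
  have hmstd : ∀ i : Fin n, m (stdVec q n i) = (b i).val := by
    intro i
    have hnot : stdVec q n i ∉ F \ reqSet q n hn :=
      fun h => (Finset.mem_sdiff.1 h).2 (hreqstd i)
    have hne : stdVec q n i ≠ e01 := fun h => h01std i h.symm
    have hex : ∃ j, stdVec q n i = stdVec q n j := ⟨i, rfl⟩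
    simp only [hm]
    rw [if_neg hnot, if_neg hne, dif_pos hex,
      show hex.choose = i from (hinj hex.choose_spec).symm]
  have hme01 : m e01 = a.val := by
    have hnot : e01 ∉ F \ reqSet q n hn :=
      fun h => (Finset.mem_sdiff.1 h).2 hreq01
    simp only [hm]
    rw [if_neg hnot]; simp
  have hcast : ∀ x : ZMod q, ((x.val : ℕ) : ZMod q) = x := fun x =>
    ZMod.natCast_rightInverse x
  have hval : ∀ x y : ZMod q, x.val • y = x * y := by
    intro x y
    rw [nsmul_eq_mul, hcast]
  refine ⟨m, ?_, ?_, ?_, ?_, ?_⟩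
  · -- bounds
    intro σ
    simp only [hm]
    have hav := ZMod.val_lt a
    split_ifs with h1 h2 h3
    · omega
    · omega
    · have := ZMod.val_lt (b h3.choose); omega
    · omega
  · -- m e₁ = 1
    show m (stdVec q n i0) = 1
    rw [hmstd i0, hb0, ZMod.val_one]
  · -- vanishing off F
    intro σ hσ
    have h1 : σ ∉ F \ reqSet q n hn := fun h => hσ (Finset.mem_sdiff.1 h).1
    have h2 : σ ≠ e01 := fun h => hσ ((hF.1) (h ▸ hreq01))
    have h3 : ¬ ∃ i, σ = stdVec q n i := by
      rintro ⟨i, rfl⟩; exact hσ ((hF.1) (hreqstd i))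
    simp only [hm]
    rw [if_neg h1, if_neg h2, dif_neg h3]
  · -- the sum vanishes
    set S : Finset (Fin n → ZMod q) :=
      (F \ reqSet q n hn) ∪ insert e01 (Finset.image (stdVec q n) Finset.univ) with hS
    have hzero : ∀ σ ∈ (Finset.univ : Finset (Fin n → ZMod q)), σ ∉ S → m σ • σ = 0 := by
      intro σ _ hσ
      rw [hS, Finset.mem_union, Finset.mem_insert] at hσ
      push_neg at hσ
      obtain ⟨h1, h2, h3⟩ := hσ
      have h3' : ¬ ∃ i, σ = stdVec q n i := by
        rintro ⟨i, rfl⟩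
        exact h3 (Finset.mem_image_of_mem _ (Finset.mem_univ i))
      simp only [hm]
      rw [if_neg h1, if_neg h2, dif_neg h3', zero_smul]
    rw [← Finset.sum_subset (Finset.subset_univ S) hzero]
    have hdisj : Disjoint (F \ reqSet q n hn)
        (insert e01 (Finset.image (stdVec q n) Finset.univ)) := by
      rw [Finset.disjoint_left]
      intro x hx hx'
      have hxreq : x ∈ reqSet q n hn := by
        rcases Finset.mem_insert.1 hx' with h | h
        · exact h ▸ hreq01
        · obtain ⟨i, _, rfl⟩ := Finset.mem_image.1 h; exact hreqstd i
      exact (Finset.mem_sdiff.1 hx).2 hxreq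
    rw [hS, Finset.sum_union hdisj]
    have h01notim : e01 ∉ Finset.image (stdVec q n) Finset.univ := by
      simp only [Finset.mem_image, not_exists]
      intro i h
      exact h01std i h.2.symm
    rw [Finset.sum_insert h01notim,
      Finset.sum_image (fun i _ j _ h => hinj h)]
    have hterm1 : ∑ σ ∈ F \ reqSet q n hn, m σ • σ = τ := by
      rw [hτ]
      refine Finset.sum_congr rfl fun σ hσ => ?_
      simp only [hm]
      rw [if_pos hσ, one_smul]
    rw [hterm1, hme01]
    have hterm3 : ∑ i : Fin n, m (stdVec q n i) • stdVec q n i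
        = ∑ i : Fin n, (b i).val • stdVec q n i :=
      Finset.sum_congr rfl fun i _ => by rw [hmstd i]
    rw [hterm3]
    funext c
    have hsum3 : (∑ i : Fin n, (b i).val • stdVec q n i) c = b c := by
      rw [Finset.sum_apply]
      have ht : ∀ i : Fin n, (b i).val • (stdVec q n i c)
          = if c = i then b i else 0 := by
        intro i
        rw [stdVec, Pi.single_apply]
        split_ifs with h
        · rw [hval, mul_one]
        · rw [smul_zero]
      calc ∑ i : Fin n, ((b i).val • stdVec q n i) c
          = ∑ i : Fin n, (if c = i then b i else 0) :=
            Finset.sum_congr rfl fun i _ => ht i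
        _ = b c := by rw [Finset.sum_ite_eq]; simp
    have he01c : e01 c = (if c = i0 then 1 else 0) + (if c = i1 then 1 else 0) := by
      simp only [he01, stdVec, Pi.add_apply, Pi.single_apply]
    show τ c + (a.val • e01 c + (∑ i : Fin n, (b i).val • stdVec q n i) c)
        = (0 : Fin n → ZMod q) c
    rw [hsum3, hval, he01c, Pi.zero_apply]
    by_cases hc0 : c = i0
    · subst hc0
      rw [if_pos rfl, if_neg hi01, hb0, ha]
      ring
    · by_cases hc1 : c = i1
      · subst hc1
        rw [if_neg hi10, if_pos rfl, hb1]
        ring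
      · rw [if_neg hc0, if_neg hc1, hbc c hc0 hc1]
        ring
  · -- m = 1 on F \ reqSet
    intro σ hσ
    simp only [hm]
    rw [if_pos hσ]
end

section
/- Let q ≥ 3 be a prime, n ≥ 3 an integer, F an admissible subset of G = (ℤ/qℤ)ⁿ, and m a coefficient system for F. Then there exists a constant C (depending only on q, n, F, m) such that for every integer p ≥ 1, |S(p) − (1/6)·q^{n−2}·(q²−1)·p³| ≤ C·p². (This is Lemma 3(iv): Σ_χ L_χ·(L_χ + K_S) = (1/6)q^{n−2}(q²−1)p³ + O(p²).) -/
open Finset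

lemma aux_sum_range_cast (N : ℕ) : ∑ k ∈ Finset.range N, (k : ℚ) = N * (N - 1) / 2 := by
  induction N with
  | zero => simp
  | succ n ih => rw [Finset.sum_range_succ, ih]; push_cast; ring

lemma aux_sum_range_sq (N : ℕ) :
    ∑ k ∈ Finset.range N, (k : ℚ) ^ 2 = N * (N - 1) * (2 * N - 1) / 6 := by
  induction N with
  | zero => simp
  | succ n ih => rw [Finset.sum_range_succ, ih]; push_cast; ring

lemma aux_zmod_val_sum (q : ℕ) [NeZero q] (g : ℕ → ℚ) :
    ∑ x : ZMod q, g (x.val) = ∑ k ∈ Finset.range q, g k := by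
  apply Finset.sum_nbij' (i := fun x => (ZMod.val x)) (j := fun k => (k : ZMod q))
  · intro a _; simpa [Finset.mem_range] using ZMod.val_lt a
  · intro a _; simp
  · intro a _; simp [ZMod.natCast_val, ZMod.natCast_rightInverse a]
  · intro a ha; simp [ZMod.val_cast_of_lt (Finset.mem_range.mp ha)]
  · intro a _; rfl

lemma aux_fiber_sum (q n : ℕ) [NeZero q] (hn : 3 ≤ n) (g : ℕ → ℚ) :
    ∑ γ : Fin n → ZMod q, g ((γ (⟨0, by omega⟩ : Fin n)).val)
      = (q:ℚ)^(n-1) * ∑ x : ZMod q, g x.val := by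
  classical
  calc ∑ γ : Fin n → ZMod q, g ((γ (⟨0, by omega⟩ : Fin n)).val)
      = ∑ z : ZMod q × ({ j // j ≠ (⟨0, by omega⟩ : Fin n) } → ZMod q), g z.1.val :=
        Equiv.sum_comp (Equiv.funSplitAt (⟨0, by omega⟩ : Fin n) (ZMod q))
          (fun z => g z.1.val)
    _ = (q:ℚ)^(n-1) * ∑ x : ZMod q, g x.val := by
        rw [Fintype.sum_prod_type]
        simp only [Finset.sum_const, Finset.card_univ, nsmul_eq_mul]
        rw [← Finset.mul_sum]
        congr 1
        rw [Fintype.card_fun, Fintype.card_subtype_compl, Fintype.card_subtype_eq, ZMod.card,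
          Fintype.card_fin]
        push_cast
        rfl

lemma aux_A_val (q n : ℕ) [NeZero q] (hq3 : 3 ≤ q) (hn : 3 ≤ n) :
    ∑ γ : Fin n → ZMod q,
        ((q:ℚ) * ((γ (⟨0, by omega⟩ : Fin n)).val : ℚ)
          - ((γ (⟨0, by omega⟩ : Fin n)).val : ℚ)^2)
      = (q:ℚ)^n * ((q:ℚ)^2 - 1) / 6 := by
  rw [aux_fiber_sum q n hn (fun k => (q:ℚ) * k - (k:ℚ)^2),
    aux_zmod_val_sum q (fun k => (q:ℚ) * k - (k:ℚ)^2)]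
  rw [Finset.sum_sub_distrib, ← Finset.mul_sum, aux_sum_range_cast, aux_sum_range_sq]
  have hqn : (q:ℚ)^(n-1) * (q:ℚ) = (q:ℚ)^n := by
    rw [← pow_succ]; congr 1; omega
  rw [← hqn]
  ring

/-- `Sval` as an explicit cubic polynomial in `p`. -/
lemma aux_Sval_poly (q n : ℕ) [NeZero q] (hn : 3 ≤ n) (F : Finset (Fin n → ZMod q))
    (m : (Fin n → ZMod q) → ℕ) (p : ℕ) :
    Sval q n hn F m p
      = (1/(q:ℚ)^2) *
        ((∑ γ : Fin n → ZMod q,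
            ((q:ℚ) * ((γ (⟨0, by omega⟩ : Fin n)).val : ℚ)
              - ((γ (⟨0, by omega⟩ : Fin n)).val : ℚ)^2)) * (p:ℚ)^3
          + (∑ γ : Fin n → ZMod q,
              (2 * ((γ (⟨0, by omega⟩ : Fin n)).val : ℚ) * (fVal q n hn F m γ : ℚ)
                - ((γ (⟨0, by omega⟩ : Fin n)).val : ℚ)^2
                - (q:ℚ) * ((γ (⟨0, by omega⟩ : Fin n)).val : ℚ))) * ((p:ℚ)^2 + (p:ℚ))
          + (∑ γ : Fin n → ZMod q,
              (2 * ((γ (⟨0, by omega⟩ : Fin n)).val : ℚ) * (fVal q n hn F m γ : ℚ)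
                - 2 * (q:ℚ) * ((γ (⟨0, by omega⟩ : Fin n)).val : ℚ)
                + (fVal q n hn F m γ : ℚ)^2 - 3 * (q:ℚ) * (fVal q n hn F m γ : ℚ)))) := by
  rw [Sval]
  congr 1
  rw [Finset.sum_mul, Finset.sum_mul, ← Finset.sum_add_distrib, ← Finset.sum_add_distrib]
  apply Finset.sum_congr rfl
  intro γ _
  ring

/-- Lemma 3(iv): `S(p) = (1/6)·q^{n−2}·(q²−1)·p³ + O(p²)`. -/
theorem stmt9 (q n : ℕ) [NeZero q] (hq : q.Prime) (hq3 : 3 ≤ q) (hn : 3 ≤ n)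
    (F : Finset (Fin n → ZMod q)) (hF : Admissible q n hn F)
    (m : (Fin n → ZMod q) → ℕ) (hm : CoeffSystem q n hn F m) :
    ∃ C : ℚ, ∀ p : ℕ, 1 ≤ p →
      |Sval q n hn F m p
          - (1 / 6) * (q : ℚ) ^ (n - 2) * ((q : ℚ) ^ 2 - 1) * (p : ℚ) ^ 3|
        ≤ C * (p : ℚ) ^ 2 := by
  have hq0 : (q:ℚ) ≠ 0 := by
    have : (0:ℚ) < q := by exact_mod_cast Nat.lt_of_lt_of_le (by norm_num) hq3
    exact ne_of_gt this
  set B : ℚ := ∑ γ : Fin n → ZMod q,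
      (2 * ((γ (⟨0, by omega⟩ : Fin n)).val : ℚ) * (fVal q n hn F m γ : ℚ)
        - ((γ (⟨0, by omega⟩ : Fin n)).val : ℚ)^2
        - (q:ℚ) * ((γ (⟨0, by omega⟩ : Fin n)).val : ℚ)) with hB
  set Cc : ℚ := ∑ γ : Fin n → ZMod q,
      (2 * ((γ (⟨0, by omega⟩ : Fin n)).val : ℚ) * (fVal q n hn F m γ : ℚ)
        - 2 * (q:ℚ) * ((γ (⟨0, by omega⟩ : Fin n)).val : ℚ)
        + (fVal q n hn F m γ : ℚ)^2 - 3 * (q:ℚ) * (fVal q n hn F m γ : ℚ)) with hCc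
  refine ⟨(2*|B| + |Cc|)/(q:ℚ)^2, ?_⟩
  intro p hp
  have hkey : Sval q n hn F m p
      - (1 / 6) * (q : ℚ) ^ (n - 2) * ((q : ℚ) ^ 2 - 1) * (p : ℚ) ^ 3
      = (B * ((p:ℚ)^2 + p) + Cc) / (q:ℚ)^2 := by
    rw [aux_Sval_poly q n hn F m p, aux_A_val q n hq3 hn, ← hB, ← hCc]
    have hqn : (q:ℚ)^n = (q:ℚ)^(n-2) * (q:ℚ)^2 := by
      rw [← pow_add]; congr 1; omega
    rw [hqn]
    field_simp
    ring
  rw [hkey]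
  have hp1 : (1:ℚ) ≤ (p:ℚ) := by exact_mod_cast hp
  have habs : |B * ((p:ℚ)^2 + p) + Cc| ≤ (2*|B| + |Cc|) * (p:ℚ)^2 := by
    calc |B * ((p:ℚ)^2 + p) + Cc| ≤ |B * ((p:ℚ)^2 + p)| + |Cc| := abs_add_le _ _
      _ = |B| * ((p:ℚ)^2 + p) + |Cc| := by
          rw [abs_mul, abs_of_nonneg (show (0:ℚ) ≤ (p:ℚ)^2 + p by positivity)]
      _ ≤ (2*|B| + |Cc|) * (p:ℚ)^2 := by
          have hpp : (p:ℚ) ≤ (p:ℚ)^2 := by nlinarith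
          have h1p : (1:ℚ) ≤ (p:ℚ)^2 := by nlinarith
          nlinarith [mul_le_mul_of_nonneg_left hpp (abs_nonneg B),
            mul_le_mul_of_nonneg_left h1p (abs_nonneg Cc), abs_nonneg B, abs_nonneg Cc]
  calc |(B * ((p:ℚ)^2 + p) + Cc) / (q:ℚ)^2|
      = |B * ((p:ℚ)^2 + p) + Cc| / (q:ℚ)^2 := by
        rw [abs_div, abs_of_nonneg (show (0:ℚ) ≤ (q:ℚ)^2 by positivity)]
    _ ≤ ((2*|B| + |Cc|) * (p:ℚ)^2) / (q:ℚ)^2 := by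
        gcongr
    _ = (2*|B| + |Cc|) / (q:ℚ)^2 * (p:ℚ)^2 := by ring
end
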